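/- arXiv:1405.6509 — 6 statements merged into one kernel-verified Lean document; each statement's English description precedes it below -/
import Mathlib

section
/- The argument-wise plurality rule M satisfies Strong Systematicity: for any two profiles L, L' for which M is defined, any arguments a, b, and any permutation ρ of the label set {in, out, undec}, if L_i(a) = ρ(L'_i(b)) for all agents i, then [M(L)](a) = ρ([M(L')](b)). -/
inductive Label : Type
  | inn | out | undec
  deriving DecidableEq

def Complete {A : Type} (att : A → A → Prop) (L : A → Label) : Prop :=
  (∀ a, L a = Label.inn → ∀ b, att b a → L b = Label.out) ∧
  (∀ a, L a = Label.out → ∃ b, att b a ∧ L b = Label.inn) ∧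
  (∀ a, L a = Label.undec →
    (∃ b, att b a ∧ L b = Label.undec) ∧ ¬ ∃ b, att b a ∧ L b = Label.inn)

/-- Number of agents labelling argument `a` with label `l` in profile `P`. -/
def count {A : Type} {n : ℕ} (P : Fin n → A → Label) (a : A) (l : Label) : ℕ :=
  (Finset.univ.filter fun i => P i a = l).card

/-- `l` is the strict plurality winner for argument `a` in profile `P`. -/
def IsPlu {A : Type} {n : ℕ} (P : Fin n → A → Label) (a : A) (l : Label) : Prop :=
  ∀ l', l' ≠ l → count P a l' < count P a l

/-- The argument-wise plurality rule is defined on `P` (no ties). -/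
def PluDefined {A : Type} {n : ℕ} (P : Fin n → A → Label) : Prop :=
  ∀ a, ∃ l, IsPlu P a l

def InSync {A : Type} (att : A → A → Prop) (a b : A) : Prop :=
  (∀ L, Complete att L → L a = L b) ∨
  (∀ L, Complete att L →
    ((L a = Label.inn ↔ L b = Label.out) ∧ (L a = Label.out ↔ L b = Label.inn)))

section

variable {A : Type} {n : ℕ}

theorem count_eq_of_forall_eq_perm {P P' : Fin n → A → Label} {a b : A} {ρ : Equiv.Perm Label}
    (h : ∀ i, P i a = ρ (P' i b)) (m : Label) : count P a (ρ m) = count P' b m := by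
  unfold count
  congr 1
  ext i
  simp only [Finset.mem_filter, h i, EmbeddingLike.apply_eq_iff_eq]

theorem IsPlu.of_forall_eq_perm {P P' : Fin n → A → Label} {a b : A} {ρ : Equiv.Perm Label}
    (h : ∀ i, P i a = ρ (P' i b)) {l : Label} (hl : IsPlu P' b l) : IsPlu P a (ρ l) := by
  intro m hm
  rw [← ρ.apply_symm_apply m, count_eq_of_forall_eq_perm h, count_eq_of_forall_eq_perm h]
  exact hl _ fun he => hm (by rw [← he, ρ.apply_symm_apply])

theorem IsPlu.unique {P : Fin n → A → Label} {a : A} {l l' : Label}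
    (hl : IsPlu P a l) (hl' : IsPlu P a l') : l = l' := by
  by_contra hne
  exact lt_asymm (hl l' (Ne.symm hne)) (hl' l hne)

end

theorem stmt3_general {A : Type} {n : ℕ}
    (P P' : Fin n → A → Label)
    (a b : A) (ρ : Equiv.Perm Label)
    (h : ∀ i, P i a = ρ (P' i b))
    (l l' : Label) (hl : IsPlu P a l) (hl' : IsPlu P' b l') :
    l = ρ l' :=
  hl.unique (hl'.of_forall_eq_perm h)

/-- the argument-wise plurality rule satisfies Strong Systematicity. -/
theorem stmt3 {A : Type} [Fintype A] {n : ℕ}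
    (P P' : Fin n → A → Label) (hdef : PluDefined P) (hdef' : PluDefined P')
    (a b : A) (ρ : Equiv.Perm Label)
    (h : ∀ i, P i a = ρ (P' i b))
    (l l' : Label) (hl : IsPlu P a l) (hl' : IsPlu P' b l') :
    l = ρ l' :=
  stmt3_general P P' a b ρ h l l' hl hl'
end

section
/- Suppose AF is an argumentation framework containing an argument a that admits complete labellings assigning a each of the three labels in, out, undec (i.e., there exist complete labellings L_in, L_out, L_undec with L_in(a)=in, L_out(a)=out, L_undec(a)=undec). Then for any number of agents n divisible by 3, there exists no aggregation operator F defined on all profiles of complete labellings (Universal Domain) that satisfies both Anonymity and Strong Systematicity. -/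
/-!
Split the `3m` agents into three blocks of `m`, labelling `a` with `in`, `out` and `undec`
respectively. Cycling the three labels of every agent yields the same profile with the blocks
permuted, so anonymity says the collective label of `a` is unchanged, while strong systematicity
says it is cycled too. But the cycle `in ↦ out ↦ undec ↦ in` has no fixed point.
-/

namespace Label

def ofFin3 : Fin 3 ≃ Label where
  toFun := ![inn, out, undec]
  invFun
    | inn => 0
    | out => 1
    | undec => 2
  left_inv := by decide
  right_inv l := by cases l <;> rfl

/-- The cyclic relabelling `inn ↦ out ↦ undec ↦ inn`. -/
def cycle : Equiv.Perm Label := ofFin3.permCongr (Equiv.addRight 1)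

theorem cycle_ofFin3 (k : Fin 3) : cycle (ofFin3 k) = ofFin3 (k + 1) := by
  simp [cycle, Equiv.permCongr_apply]

theorem cycle_ne_self (l : Label) : cycle l ≠ l := by
  cases l <;> decide

end Label

theorem exists_perm_block_add_one (k m : ℕ) [NeZero k] :
    ∃ σ : Equiv.Perm (Fin (k * m)),
      ∀ i, (finProdFinEquiv.symm (σ i)).1 = (finProdFinEquiv.symm i).1 + 1 :=
  ⟨finProdFinEquiv.permCongr ((Equiv.addRight 1).prodCongr (Equiv.refl _)), fun i => by
    simp [Equiv.permCongr_apply]⟩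

theorem not_anonymous_systematic_of_shift {ι B A γ : Type*} (v : B → A → γ) (x : A)
    (P : ι → B) (σ : Equiv.Perm ι) (ρ : Equiv.Perm γ) (hρ : ∀ c, ρ c ≠ c)
    (hP : ∀ i, v (P (σ i)) x = ρ (v (P i) x)) :
    ¬ ∃ F : (ι → B) → A → γ,
      (∀ (P : ι → B) (τ : Equiv.Perm ι), F (fun i => P (τ i)) = F P) ∧
      (∀ (P P' : ι → B) (y z : A) (π : Equiv.Perm γ),
        (∀ i, v (P i) y = π (v (P' i) z)) → F P y = π (F P' z)) := by
  rintro ⟨F, hanon, hsys⟩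
  apply hρ (F P x)
  calc ρ (F P x) = F (fun i => P (σ i)) x := (hsys _ _ x x ρ hP).symm
    _ = F P x := by rw [hanon]

theorem stmt5_general {A : Type} (att : A → A → Prop) (a : A) {n : ℕ}
    (hin : ∃ L, Complete att L ∧ L a = Label.inn)
    (hout : ∃ L, Complete att L ∧ L a = Label.out)
    (hund : ∃ L, Complete att L ∧ L a = Label.undec)
    (hdiv : 3 ∣ n) :
    ¬ ∃ F : (Fin n → {L : A → Label // Complete att L}) → A → Label,
      -- Anonymity
      (∀ (P : Fin n → {L : A → Label // Complete att L}) (ρ : Equiv.Perm (Fin n)),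
        F (fun i => P (ρ i)) = F P) ∧
      -- Strong Systematicity
      (∀ (P P' : Fin n → {L : A → Label // Complete att L}) (x y : A)
          (ρ : Equiv.Perm Label),
        (∀ i, (P i).1 x = ρ ((P' i).1 y)) → F P x = ρ (F P' y)) := by
  obtain ⟨m, rfl⟩ := hdiv
  have hlab : ∀ k : Fin 3, ∃ L, Complete att L ∧ L a = Label.ofFin3 k := by
    intro k
    fin_cases k
    exacts [hin, hout, hund]
  choose Q hQ hQa using hlab
  obtain ⟨σ, hσ⟩ := exists_perm_block_add_one 3 m
  refine not_anonymous_systematic_of_shift Subtype.val a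
    (fun i => ⟨Q (finProdFinEquiv.symm i).1, hQ _⟩) σ Label.cycle Label.cycle_ne_self
    fun i => ?_
  simp only [hσ, hQa, Label.cycle_ofFin3]

/-- if some argument `a` can feasibly take all three labels in complete
labellings, then for `n` divisible by 3 there is no aggregation operator on all
profiles of complete labellings satisfying Anonymity and Strong Systematicity. -/
theorem stmt5 {A : Type} [Fintype A] (att : A → A → Prop) (a : A) {n : ℕ}
    (hin : ∃ L, Complete att L ∧ L a = Label.inn)
    (hout : ∃ L, Complete att L ∧ L a = Label.out)
    (hund : ∃ L, Complete att L ∧ L a = Label.undec)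
    (hdiv : 3 ∣ n) :
    ¬ ∃ F : (Fin n → {L : A → Label // Complete att L}) → A → Label,
      -- Anonymity
      (∀ (P : Fin n → {L : A → Label // Complete att L}) (ρ : Equiv.Perm (Fin n)),
        F (fun i => P (ρ i)) = F P) ∧
      -- Strong Systematicity
      (∀ (P P' : Fin n → {L : A → Label // Complete att L}) (x y : A)
          (ρ : Equiv.Perm Label),
        (∀ i, (P i).1 x = ρ ((P' i).1 y)) → F P x = ρ (F P' y)) :=
  stmt5_general att a hin hout hund hdiv
end

section
/- Suppose AF is an argumentation framework containing an argument a whose complete labellings assign it only the labels out and undec, with both occurring (i.e., there exist complete labellings L_out, L_undec with L_out(a)=out and L_undec(a)=undec, and no complete labelling assigns a the label in). Then for any even number of agents n, there exists no aggregation operator satisfying Universal Domain, Anonymity, Strong Systematicity, and Collective Rationality. -/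
/-! Split an even number of agents into two halves voting `L_out` and `L_undec`. Exchanging the
halves leaves the outcome unchanged by anonymity but swaps `out` and `undec` at `a` in every ballot,
so by strong systematicity the outcome at `a` is fixed by that swap, i.e. it is `in`, which no
complete labelling allows. -/

theorem Label.swap_out_undec_eq_self_iff (l : Label) :
    Equiv.swap Label.out Label.undec l = l ↔ l = Label.inn := by
  cases l <;> simp [Equiv.swap_apply_of_ne_of_ne]

theorem exists_profile_swapped_by_perm {α : Type} {n : ℕ} (hn : Even n) (u v : α) :
    ∃ (P : Fin n → α) (τ : Equiv.Perm (Fin n)),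
      ∀ i, (P i = u ∧ P (τ i) = v) ∨ (P i = v ∧ P (τ i) = u) := by
  obtain ⟨m, rfl⟩ := hn
  refine ⟨fun i => Sum.elim (fun _ => u) (fun _ => v) (finSumFinEquiv.symm i),
    finSumFinEquiv.permCongr (Equiv.sumComm _ _), fun i => ?_⟩
  obtain ⟨j | j, rfl⟩ := finSumFinEquiv.surjective i <;> simp [-finSumFinEquiv_apply_right]

section Aggregation

variable {A ι : Type} (att : A → A → Prop)

def Anonymous (F : (ι → {L : A → Label // Complete att L}) → A → Label) : Prop :=
  ∀ (P : ι → {L : A → Label // Complete att L}) (ρ : Equiv.Perm ι),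
    F (fun i => P (ρ i)) = F P

def StronglySystematic (F : (ι → {L : A → Label // Complete att L}) → A → Label) : Prop :=
  ∀ (P P' : ι → {L : A → Label // Complete att L}) (x y : A) (ρ : Equiv.Perm Label),
    (∀ i, (P i).1 x = ρ ((P' i).1 y)) → F P x = ρ (F P' y)

variable {att}

theorem apply_eq_perm_apply_of_perm_profile
    {F : (ι → {L : A → Label // Complete att L}) → A → Label}
    (hanon : Anonymous att F) (hsys : StronglySystematic att F)
    {P : ι → {L : A → Label // Complete att L}} {τ : Equiv.Perm ι} {ρ : Equiv.Perm Label}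
    {x : A}
    (h : ∀ i, (P i).1 x = ρ ((P (τ i)).1 x)) :
    F P x = ρ (F P x) := by
  simpa only [hanon P τ] using hsys P (fun i => P (τ i)) x x ρ h

end Aggregation

theorem stmt6_general {A : Type} (att : A → A → Prop) (a : A) {n : ℕ}
    (hout : ∃ L, Complete att L ∧ L a = Label.out)
    (hund : ∃ L, Complete att L ∧ L a = Label.undec)
    (hnoin : ∀ L, Complete att L → L a ≠ Label.inn)
    (hn : Even n) :
    ¬ ∃ F : (Fin n → {L : A → Label // Complete att L}) → A → Label,
      -- Anonymity
      (∀ (P : Fin n → {L : A → Label // Complete att L}) (ρ : Equiv.Perm (Fin n)),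
        F (fun i => P (ρ i)) = F P) ∧
      -- Strong Systematicity
      (∀ (P P' : Fin n → {L : A → Label // Complete att L}) (x y : A)
          (ρ : Equiv.Perm Label),
        (∀ i, (P i).1 x = ρ ((P' i).1 y)) → F P x = ρ (F P' y)) ∧
      -- Collective Rationality
      (∀ P : Fin n → {L : A → Label // Complete att L}, Complete att (F P)) := by
  rintro ⟨F, hanon, hsys, hcr⟩
  obtain ⟨Lo, hLo, hLoa⟩ := hout
  obtain ⟨Lu, hLu, hLua⟩ := hund
  obtain ⟨P, τ, hP⟩ :=
    exists_profile_swapped_by_perm hn (⟨Lo, hLo⟩ : {L // Complete att L}) ⟨Lu, hLu⟩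
  have hswap : ∀ i, (P i).1 a = Equiv.swap Label.out Label.undec ((P (τ i)).1 a) := by
    intro i
    rcases hP i with ⟨hi, hτi⟩ | ⟨hi, hτi⟩ <;> simp [hi, hτi, hLoa, hLua]
  have hfix := apply_eq_perm_apply_of_perm_profile hanon hsys hswap
  exact hnoin (F P) (hcr P) ((Label.swap_out_undec_eq_self_iff _).mp hfix.symm)

/-- if some argument `a` can feasibly take exactly the labels `out` and
`undec` in complete labellings, then for even `n` there is no aggregation operator
satisfying Universal Domain, Anonymity, Strong Systematicity and Collective
Rationality. -/
theorem stmt6 {A : Type} [Fintype A] (att : A → A → Prop) (a : A) {n : ℕ}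
    (hout : ∃ L, Complete att L ∧ L a = Label.out)
    (hund : ∃ L, Complete att L ∧ L a = Label.undec)
    (hnoin : ∀ L, Complete att L → L a ≠ Label.inn)
    (hn : Even n) :
    ¬ ∃ F : (Fin n → {L : A → Label // Complete att L}) → A → Label,
      -- Anonymity
      (∀ (P : Fin n → {L : A → Label // Complete att L}) (ρ : Equiv.Perm (Fin n)),
        F (fun i => P (ρ i)) = F P) ∧
      -- Strong Systematicity
      (∀ (P P' : Fin n → {L : A → Label // Complete att L}) (x y : A)
          (ρ : Equiv.Perm Label),
        (∀ i, (P i).1 x = ρ ((P' i).1 y)) → F P x = ρ (F P' y)) ∧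
      -- Collective Rationality
      (∀ P : Fin n → {L : A → Label // Complete att L}, Complete att (F P)) :=
  stmt6_general att a hout hund hnoin hn
end

section
/- The argument-wise plurality rule satisfies IN-CR1 on profiles of complete labellings: given a profile L = (L_1,...,L_n) of complete labellings for which M(L) is defined, if [M(L)](a) = in for some argument a, then there is no argument b with b → a and [M(L)](b) = in. -/
theorem Complete.eq_out_of_defeater_eq_inn {A : Type} {att : A → A → Prop} {L : A → Label}
    (hL : Complete att L) {a b : A} (hba : att b a) (hb : L b = Label.inn) : L a = Label.out := by
  cases h : L a with
  | inn => simp [hL.1 a h b hba] at hb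
  | out => rfl
  | undec => exact absurd ⟨b, hba, hb⟩ (hL.2.2 a h).2

theorem count_le_count_of_imp {A : Type} {n : ℕ} {P : Fin n → A → Label} {a b : A}
    {l l' : Label} (h : ∀ i, P i a = l → P i b = l') : count P a l ≤ count P b l' :=
  Finset.card_le_card fun i hi => by
    simp only [Finset.mem_filter, Finset.mem_univ, true_and] at hi ⊢
    exact h i hi

theorem IsPlu.count_out_lt_count_inn {A : Type} {n : ℕ} {P : Fin n → A → Label} {a : A}
    (ha : IsPlu P a Label.inn) : count P a Label.out < count P a Label.inn :=
  ha Label.out (by decide)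

theorem stmt10_general {A : Type} {n : ℕ} (att : A → A → Prop)
    (P : Fin n → A → Label) (hcomp : ∀ i, Complete att (P i))
    (a : A) (ha : IsPlu P a Label.inn) :
    ¬ ∃ b, att b a ∧ IsPlu P b Label.inn := by
  rintro ⟨b, hba, hb⟩
  have a_in_b_out : count P a Label.inn ≤ count P b Label.out :=
    count_le_count_of_imp fun i hi => (hcomp i).1 a hi b hba
  have b_in_a_out : count P b Label.inn ≤ count P a Label.out :=
    count_le_count_of_imp fun i hi => (hcomp i).eq_out_of_defeater_eq_inn hba hi
  have := ha.count_out_lt_count_inn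
  have := hb.count_out_lt_count_inn
  omega

/-- on profiles of complete labellings, the argument-wise plurality rule
satisfies IN-CR1: a collectively accepted argument has no collectively accepted
defeater. -/
theorem stmt10 {A : Type} [Fintype A] {n : ℕ} (att : A → A → Prop)
    (P : Fin n → A → Label) (hcomp : ∀ i, Complete att (P i))
    (hdef : PluDefined P)
    (a : A) (ha : IsPlu P a Label.inn) :
    ¬ ∃ b, att b a ∧ IsPlu P b Label.inn :=
  stmt10_general att P hcomp a ha
end

section
/- Let AF be an argumentation framework and a an argument such that every defeater b of a is in-sync with a (a ≡ b). Then for any profile of complete labellings on which the argument-wise plurality rule M is defined, the collective labelling of a is legal: if [M(L)](a) = out then some defeater of a is collectively in; if [M(L)](a) = in then all defeaters of a are collectively out; if [M(L)](a) = undec then some defeater of a is collectively undec and no defeater is collectively in. -/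
section Plurality

variable {A : Type} {n : ℕ} {P : Fin n → A → Label} {a b : A}

lemma count_relabel (e : Label ≃ Label) (hb : ∀ i, P i b = e (P i a)) (l : Label) :
    count P b (e l) = count P a l := by
  simp only [count, hb, e.apply_eq_iff_eq]

lemma isPlu_relabel_iff (e : Label ≃ Label) (hb : ∀ i, P i b = e (P i a)) (l : Label) :
    IsPlu P b (e l) ↔ IsPlu P a l := by
  unfold IsPlu
  rw [← e.forall_congr_right]
  simp only [ne_eq, e.apply_eq_iff_eq, count_relabel e hb]

lemma IsPlu.relabel (e : Label ≃ Label) (hb : ∀ i, P i b = e (P i a)) {i : Fin n}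
    (h : IsPlu P a (P i a)) : IsPlu P b (P i b) := by
  rwa [hb, isPlu_relabel_iff e hb]

lemma IsPlu.eq {l l' : Label} (h : IsPlu P a l) (h' : IsPlu P a l') : l = l' := by
  by_contra hne
  exact (h l' (Ne.symm hne)).asymm (h' l hne)

lemma IsPlu.exists_eq {l : Label} (h : IsPlu P a l) : ∃ i, P i a = l := by
  obtain ⟨l', hl'⟩ : ∃ l', l' ≠ l := by
    cases l <;> first | exact ⟨.out, by decide⟩ | exact ⟨.inn, by decide⟩
  obtain ⟨i, hi⟩ := Finset.card_pos.mp (Nat.zero_lt_of_lt (h l' hl'))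
  exact ⟨i, (Finset.mem_filter.mp hi).2⟩

lemma InSync.exists_relabel {att : A → A → Prop} (h : InSync att a b) :
    ∃ e : Label ≃ Label, ∀ L, Complete att L → L b = e (L a) := by
  rcases h with h | h
  · exact ⟨Equiv.refl _, fun L hL => (h L hL).symm⟩
  · refine ⟨Equiv.swap .inn .out, fun L hL => ?_⟩
    obtain ⟨hin, hout⟩ := h L hL
    cases ha : L a <;> cases hb : L b <;> simp_all [Equiv.swap_apply_def]

lemma IsPlu.of_inSync {att : A → A → Prop} {l : Label} (hab : InSync att a b)
    (hcomp : ∀ i, Complete att (P i)) (h : IsPlu P a l) {i : Fin n} (hi : P i a = l) : IsPlu P b (P i b) := by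
  obtain ⟨e, he⟩ := hab.exists_relabel
  subst hi
  exact h.relabel e fun j => he _ (hcomp j)

end Plurality

theorem stmt14_general {A : Type} {n : ℕ} (att : A → A → Prop) (a : A)
    (hsync : ∀ b, att b a → InSync att a b)
    (P : Fin n → A → Label) (hcomp : ∀ i, Complete att (P i)) :
    (IsPlu P a Label.out → ∃ b, att b a ∧ IsPlu P b Label.inn) ∧
    (IsPlu P a Label.inn → ∀ b, att b a → IsPlu P b Label.out) ∧
    (IsPlu P a Label.undec →
      (∃ b, att b a ∧ IsPlu P b Label.undec) ∧
      ¬ ∃ b, att b a ∧ IsPlu P b Label.inn) := by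
  have transfer {l : Label} {b : A} (hb : att b a) (h : IsPlu P a l) {i : Fin n}
      (hi : P i a = l) : IsPlu P b (P i b) :=
    h.of_inSync (hsync b hb) hcomp hi
  refine ⟨fun h => ?_, fun h b hb => ?_, fun h => ?_⟩
  · obtain ⟨i, hi⟩ := h.exists_eq
    obtain ⟨b, hb, hbi⟩ := (hcomp i).2.1 a hi
    exact ⟨b, hb, hbi ▸ transfer hb h hi⟩
  · obtain ⟨i, hi⟩ := h.exists_eq
    exact (hcomp i).1 a hi b hb ▸ transfer hb h hi
  · obtain ⟨i, hi⟩ := h.exists_eq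
    obtain ⟨⟨b, hb, hbi⟩, hno_in⟩ := (hcomp i).2.2 a hi
    refine ⟨⟨b, hb, hbi ▸ transfer hb h hi⟩, fun ⟨c, hc, hc_in⟩ => hno_in ⟨c, hc, ?_⟩⟩
    exact (transfer hc h hi).eq hc_in

/-- if every defeater of `a` is in-sync with `a`, the argument-wise
plurality rule always produces a legal collective labelling at `a`. -/
theorem stmt14 {A : Type} [Fintype A] {n : ℕ} (att : A → A → Prop) (a : A)
    (hsync : ∀ b, att b a → InSync att a b)
    (P : Fin n → A → Label) (hcomp : ∀ i, Complete att (P i))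
    (hdef : PluDefined P) :
    (IsPlu P a Label.out → ∃ b, att b a ∧ IsPlu P b Label.inn) ∧
    (IsPlu P a Label.inn → ∀ b, att b a → IsPlu P b Label.out) ∧
    (IsPlu P a Label.undec →
      (∃ b, att b a ∧ IsPlu P b Label.undec) ∧
      ¬ ∃ b, att b a ∧ IsPlu P b Label.inn) :=
  stmt14_general att a hsync P hcomp
end

section
/- Let AF be an argumentation framework such that each argument has at most one defeater b with undec ∈ JS(b) (i.e., at most one defeater that can be labelled undec by some complete labelling). Then the argument-wise plurality rule satisfies Collective Rationality on AF: on every profile of complete labellings for which it is defined, its output is a complete labelling. -/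
/-!
The grounded labelling `G` is complete and is contained in every complete labelling, so every
argument with `G a ≠ undec` gets the label `G a` from every agent, hence from the plurality rule.
At an argument with `G a = undec` no defeater is `G`-in and, by hypothesis, at most one defeater
`u` is `G`-undec; all others are out everywhere. A labelling in which the other defeaters are out
is legal at `a` iff it labels `a` with the flip of the label of `u`. Each agent's labelling is of
this form, flipping is a bijection on labels that transports vote counts, so the plurality
outcome is of this form too.
-/

namespace Label

def flip : Label → Label
  | inn => out
  | out => inn
  | undec => undec

theorem flip_involutive : Function.Involutive flip := by
  intro l; cases l <;> rfl

end Label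

section Labelling

variable {A : Type} {att : A → A → Prop} {L : A → Label} {a : A}

variable (att) in
def LegalAt (L : A → Label) (a : A) : Prop :=
  (L a = Label.inn → ∀ b, att b a → L b = Label.out) ∧
  (L a = Label.out → ∃ b, att b a ∧ L b = Label.inn) ∧
  (L a = Label.undec →
    (∃ b, att b a ∧ L b = Label.undec) ∧ ¬ ∃ b, att b a ∧ L b = Label.inn)

theorem complete_iff_forall_legalAt : Complete att L ↔ ∀ a, LegalAt att L a := by
  simp only [Complete, LegalAt, forall_and]

theorem Complete.legalAt (hL : Complete att L) (a : A) : LegalAt att L a :=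
  complete_iff_forall_legalAt.1 hL a

theorem legalAt_of_eq_inn (ha : L a = Label.inn) (h : ∀ b, att b a → L b = Label.out) :
    LegalAt att L a := by
  refine ⟨fun _ => h, ?_, ?_⟩ <;> simp [ha]

theorem legalAt_of_eq_out (ha : L a = Label.out) (h : ∃ b, att b a ∧ L b = Label.inn) :
    LegalAt att L a := by
  refine ⟨?_, fun _ => h, ?_⟩ <;> simp [ha]

theorem legalAt_of_eq_undec (ha : L a = Label.undec) (hu : ∃ b, att b a ∧ L b = Label.undec)
    (hin : ¬ ∃ b, att b a ∧ L b = Label.inn) : LegalAt att L a := by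
  refine ⟨?_, ?_, fun _ => ⟨hu, hin⟩⟩ <;> simp [ha]

theorem Complete.eq_out_of_attack (hL : Complete att L) {b c : A} (hcb : att c b)
    (hc : L c = Label.inn) : L b = Label.out := by
  obtain ⟨hin, -, hundec⟩ := hL.legalAt b
  cases hb : L b
  · simpa [hc] using hin hb c hcb
  · rfl
  · exact absurd ⟨c, hcb, hc⟩ (hundec hb).2

theorem Complete.eq_inn_of_forall_out (hL : Complete att L)
    (h : ∀ b, att b a → L b = Label.out) : L a = Label.inn := by
  obtain ⟨-, hout, hundec⟩ := hL.legalAt a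
  cases ha : L a
  · rfl
  · obtain ⟨b, hba, hb⟩ := hout ha
    simp [h b hba] at hb
  · obtain ⟨b, hba, hb⟩ := (hundec ha).1
    simp [h b hba] at hb

theorem legalAt_iff_eq_flip {u : A} (hua : att u a)
    (hout : ∀ b, att b a → b ≠ u → L b = Label.out) :
    LegalAt att L a ↔ L a = (L u).flip := by
  have hexists : ∀ l, l ≠ Label.out → ((∃ b, att b a ∧ L b = l) ↔ L u = l) := by
    refine fun l hl => ⟨?_, fun h => ⟨u, hua, h⟩⟩
    rintro ⟨b, hba, rfl⟩
    obtain rfl | hbu := eq_or_ne b u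
    · rfl
    · exact absurd (hout b hba hbu) hl
  have hforall : (∀ b, att b a → L b = Label.out) ↔ L u = Label.out :=
    ⟨fun h => h u hua, fun h b hba => by
      by_cases hbu : b = u
      · rw [hbu, h]
      · exact hout b hba hbu⟩
  unfold LegalAt
  rw [hforall, hexists _ (by decide), hexists _ (by decide)]
  cases L a <;> cases L u <;> simp [Label.flip]

end Labelling

section Grounded

variable {A : Type} {att : A → A → Prop} {L : A → Label} {a : A}

variable (att) in
/-- Dung's characteristic function. -/
def characteristic : Set A →o Set A where
  toFun S := {a | ∀ b, att b a → ∃ c ∈ S, att c b}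
  monotone' _ _ hST _ ha b hb :=
    let ⟨c, hc, hcb⟩ := ha b hb
    ⟨c, hST hc, hcb⟩

variable (att) in
def grounded : Set A := OrderHom.lfp (characteristic att)

theorem grounded_subset (hL : Complete att L) : grounded att ⊆ {a | L a = Label.inn} :=
  OrderHom.lfp_le _ fun _ ha => hL.eq_inn_of_forall_out fun b hb =>
    let ⟨_, hc, hcb⟩ := ha b hb
    hL.eq_out_of_attack hcb hc

theorem not_attack_of_mem_grounded (hL : Complete att L) {b c : A} (hb : b ∈ grounded att)
    (hc : c ∈ grounded att) : ¬ att c b := fun hcb => by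
  have hb' : L b = Label.inn := grounded_subset hL hb
  simpa [hb'] using hL.eq_out_of_attack hcb (grounded_subset hL hc)

theorem characteristic_grounded : characteristic att (grounded att) = grounded att :=
  OrderHom.map_lfp _

open Classical in
variable (att) in
noncomputable def groundedLabelling (a : A) : Label :=
  if a ∈ grounded att then Label.inn
  else if ∃ c ∈ grounded att, att c a then Label.out
  else Label.undec

theorem groundedLabelling_eq_inn_iff :
    groundedLabelling att a = Label.inn ↔ a ∈ grounded att := by
  unfold groundedLabelling; split_ifs <;> simp_all

theorem groundedLabelling_complete (hL : Complete att L) :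
    Complete att (groundedLabelling att) := by
  rw [complete_iff_forall_legalAt]
  intro a
  by_cases haG : a ∈ grounded att
  · have hdef : a ∈ characteristic att (grounded att) := by rwa [characteristic_grounded]
    refine legalAt_of_eq_inn (by simp [groundedLabelling, haG]) fun b hba => ?_
    obtain ⟨c, hc, hcb⟩ := hdef b hba
    have hbG : b ∉ grounded att := fun hbG => not_attack_of_mem_grounded hL hbG hc hcb
    simpa [groundedLabelling, hbG] using ⟨c, hc, hcb⟩
  by_cases hatt : ∃ c ∈ grounded att, att c a
  · have ⟨c, hc, hca⟩ := hatt
    exact legalAt_of_eq_out (by simp [groundedLabelling, haG, hatt])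
      ⟨c, hca, groundedLabelling_eq_inn_iff.2 hc⟩
  have hdef : a ∉ characteristic att (grounded att) := by rwa [characteristic_grounded]
  obtain ⟨b, hba, hb⟩ : ∃ b, att b a ∧ ∀ c ∈ grounded att, ¬ att c b := by
    change ¬ ∀ b, att b a → ∃ c ∈ grounded att, att c b at hdef
    simpa using hdef
  have hbG : b ∉ grounded att := fun hbG => hatt ⟨b, hbG, hba⟩
  refine legalAt_of_eq_undec (by simp [groundedLabelling, haG, hatt])
    ⟨b, hba, by simpa [groundedLabelling, hbG] using hb⟩ ?_
  rintro ⟨c, hca, hc⟩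
  exact hatt ⟨c, groundedLabelling_eq_inn_iff.1 hc, hca⟩

theorem Complete.eq_groundedLabelling (hL : Complete att L)
    (ha : groundedLabelling att a ≠ Label.undec) : L a = groundedLabelling att a := by
  unfold groundedLabelling at *
  split_ifs at * with haG hatt
  · exact grounded_subset hL haG
  · obtain ⟨c, hc, hca⟩ := hatt
    exact hL.eq_out_of_attack hca (grounded_subset hL hc)
  · exact absurd rfl ha

theorem Complete.legalAt_of_agree {L₀ : A → Label} (hL₀ : Complete att L₀)
    (hagree : ∀ b, L₀ b ≠ Label.undec → L b = L₀ b) (ha : L₀ a ≠ Label.undec) :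
    LegalAt att L a := by
  obtain ⟨hin, hout, -⟩ := hL₀.legalAt a
  cases h : L₀ a
  · refine legalAt_of_eq_inn (by simp [hagree a ha, h]) fun b hba => ?_
    have hb := hin h b hba
    simp [hagree b (by simp [hb]), hb]
  · obtain ⟨b, hba, hb⟩ := hout h
    exact legalAt_of_eq_out (by simp [hagree a ha, h])
      ⟨b, hba, by simp [hagree b (by simp [hb]), hb]⟩
  · exact absurd h ha

end Grounded

section Plurality

variable {A : Type} {n : ℕ} {P : Fin n → A → Label} {a : A} {l l' : Label}

theorem IsPlu.unique_s18 (h : IsPlu P a l) (h' : IsPlu P a l') : l = l' := by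
  by_contra hne
  exact (h l' (Ne.symm hne)).asymm (h' l hne)

theorem IsPlu.exists_vote (h : IsPlu P a l) : ∃ i, P i a = l := by
  obtain ⟨l', hl'⟩ : ∃ l', l' ≠ l := by
    cases l
    exacts [⟨Label.out, by decide⟩, ⟨Label.inn, by decide⟩, ⟨Label.inn, by decide⟩]
  obtain ⟨i, hi⟩ := Finset.card_pos.1 (Nat.zero_lt_of_lt (h l' hl'))
  exact ⟨i, (Finset.mem_filter.1 hi).2⟩

theorem IsPlu.eq_of_unanimous (h : IsPlu P a l) (hall : ∀ i, P i a = l') : l = l' := by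
  obtain ⟨i, hi⟩ := h.exists_vote
  rw [← hi, hall]

theorem IsPlu.flip {u : A} (hflip : ∀ i, P i a = (P i u).flip) (h : IsPlu P u l) :
    IsPlu P a l.flip := by
  have hcount : ∀ m, count P a m = count P u m.flip := fun m => by
    simp only [count, hflip, Label.flip_involutive.eq_iff]
  intro m hm
  rw [hcount, hcount, Label.flip_involutive]
  exact h _ fun hm' => hm (by rw [← hm', Label.flip_involutive])

end Plurality

theorem stmt18_general {A : Type} {n : ℕ} (att : A → A → Prop)
    (hlim : ∀ x b c, att b x → att c x →
      (∃ L, Complete att L ∧ L b = Label.undec) →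
      (∃ L, Complete att L ∧ L c = Label.undec) → b = c)
    (P : Fin n → A → Label) (hcomp : ∀ i, Complete att (P i))
    (Lstar : A → Label) (hLstar : ∀ a, IsPlu P a (Lstar a)) :
    Complete att Lstar := by
  rw [complete_iff_forall_legalAt]
  intro a
  obtain ⟨i₀, -⟩ := (hLstar a).exists_vote
  set G := groundedLabelling att
  have hG : Complete att G := groundedLabelling_complete (hcomp i₀)
  have hagree : ∀ b, G b ≠ Label.undec → Lstar b = G b :=
    fun b hb => (hLstar b).eq_of_unanimous fun i => (hcomp i).eq_groundedLabelling hb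
  obtain ha | ha := ne_or_eq (G a) Label.undec
  · exact hG.legalAt_of_agree hagree ha
  obtain ⟨⟨u, hua, hu⟩, hnoin⟩ := (hG.legalAt a).2.2 ha
  have hGout : ∀ b, att b a → b ≠ u → G b = Label.out := by
    intro b hba hbu
    cases hb : G b
    · exact absurd ⟨b, hba, hb⟩ hnoin
    · rfl
    · exact absurd (hlim a b u hba hua ⟨G, hG, hb⟩ ⟨G, hG, hu⟩) hbu
  have hout (L : A → Label) (hL : ∀ b, G b ≠ Label.undec → L b = G b) :
      ∀ b, att b a → b ≠ u → L b = Label.out := fun b hba hbu => by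
    rw [hL b (by simp [hGout b hba hbu]), hGout b hba hbu]
  have hflip (i : Fin n) : P i a = (P i u).flip :=
    (legalAt_iff_eq_flip hua (hout _ fun _ => (hcomp i).eq_groundedLabelling)).1
      ((hcomp i).legalAt a)
  exact (legalAt_iff_eq_flip hua (hout _ hagree)).2 ((hLstar a).unique_s18 ((hLstar u).flip hflip))

/-- if each argument has at most one defeater that can be labelled
undec by some complete labelling, then the argument-wise plurality rule satisfies
Collective Rationality. -/
theorem stmt18 {A : Type} [Fintype A] {n : ℕ} (att : A → A → Prop)
    (hlim : ∀ x b c, att b x → att c x →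
      (∃ L, Complete att L ∧ L b = Label.undec) →
      (∃ L, Complete att L ∧ L c = Label.undec) → b = c)
    (P : Fin n → A → Label) (hcomp : ∀ i, Complete att (P i))
    (hdef : PluDefined P)
    (Lstar : A → Label) (hLstar : ∀ a, IsPlu P a (Lstar a)) :
    Complete att Lstar :=
  stmt18_general att hlim P hcomp Lstar hLstar
end
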